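/- arXiv:2303.13267 — 2 statements merged into one kernel-verified Lean document; each statement's English description precedes it below -/
import Mathlib

section
/- Every finite 2-degenerate simple graph is near-bipartite: its vertex set can be partitioned into an independent set and a set inducing an acyclic subgraph (a forest). -/
open Classical

/-- Removability of a set of remaining vertices by legal `Delete`/`DeleteSave` operations. -/
inductive SimpleGraph.WDRem {V : Type*} (G : SimpleGraph V) : Finset V → (V → ℤ) → Prop
  | empty (f : V → ℤ) : SimpleGraph.WDRem G ∅ f
  | delete (S : Finset V) (f : V → ℤ) (u : V) (hu : u ∈ S)
      (hleg : ∀ v ∈ S.erase u, 0 ≤ f v - (if G.Adj u v then 1 else 0))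
      (h : SimpleGraph.WDRem G (S.erase u) (fun v => f v - (if G.Adj u v then 1 else 0))) :
      SimpleGraph.WDRem G S f
  | deleteSave (S : Finset V) (f : V → ℤ) (u w : V) (hu : u ∈ S) (hw : w ∈ S)
      (hadj : G.Adj u w) (hsave : f w < f u)
      (hleg : ∀ v ∈ S.erase u, 0 ≤ f v - (if G.Adj u v ∧ v ≠ w then 1 else 0))
      (h : SimpleGraph.WDRem G (S.erase u)
        (fun v => f v - (if G.Adj u v ∧ v ≠ w then 1 else 0))) :
      SimpleGraph.WDRem G S f

/-- Removability by legal `Delete` operations only. -/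
inductive SimpleGraph.DelRem {V : Type*} (G : SimpleGraph V) : Finset V → (V → ℤ) → Prop
  | empty (f : V → ℤ) : SimpleGraph.DelRem G ∅ f
  | delete (S : Finset V) (f : V → ℤ) (u : V) (hu : u ∈ S)
      (hleg : ∀ v ∈ S.erase u, 0 ≤ f v - (if G.Adj u v then 1 else 0))
      (h : SimpleGraph.DelRem G (S.erase u) (fun v => f v - (if G.Adj u v then 1 else 0))) :
      SimpleGraph.DelRem G S f

/-- `G` is weakly `f`-degenerate. -/
def SimpleGraph.WeaklyDeg {V : Type*} [Fintype V] (G : SimpleGraph V) (f : V → ℤ) : Prop :=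
  G.WDRem Finset.univ f

/-- The weak degeneracy `wd(G)`. -/
noncomputable def SimpleGraph.wdeg {V : Type*} [Fintype V] (G : SimpleGraph V) : ℕ :=
  sInf {d : ℕ | G.WeaklyDeg fun _ => (d : ℤ)}

/-!
Induct on finite vertex sets. Remove a vertex `v` with at most two neighbours and split the
rest into an independent set `I` and a forest `F`. If `v` has no neighbour in `I`, put `v` into
`I`. Otherwise `v` has at most one neighbour in `F`, and since every vertex of a cycle has two
distinct neighbours on it, `F ∪ {v}` is still a forest.
-/

namespace SimpleGraph

variable {V : Type*} {G : SimpleGraph V}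

lemma isAcyclic_induce_iff {s : Set V} :
    (G.induce s).IsAcyclic ↔ ∀ ⦃u : V⦄ (c : G.Walk u u), c.IsCycle → ∃ x ∈ c.support, x ∉ s := by
  constructor
  · intro hs u c hc
    by_contra! hcs
    exact hs _ ((Walk.isCycle_map_iff_of_injective Subtype.val_injective).mp
      (by rwa [Walk.map_induce c hcs]))
  · intro h u c hc
    obtain ⟨x, hx, hxs⟩ := h _ (hc.map (f := (Embedding.induce s).toHom) Subtype.val_injective)
    rw [Walk.support_map, List.mem_map] at hx
    obtain ⟨y, -, rfl⟩ := hx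
    exact hxs y.2

lemma Walk.IsCycle.exists_adj_ne {u : V} {c : G.Walk u u} (hc : c.IsCycle) {v : V}
    (hv : v ∈ c.support) :
    ∃ a ∈ c.support, ∃ b ∈ c.support, a ≠ b ∧ G.Adj v a ∧ G.Adj v b := by
  have hrot := hc.rotate hv
  set c' := c.rotate v hv
  refine ⟨c'.snd, ?_, c'.penultimate, ?_, hrot.snd_ne_penultimate,
    c'.adj_snd hrot.not_nil, (c'.adj_penultimate hrot.not_nil).symm⟩ <;>
    exact (c.mem_support_rotate_iff v hv).mp (c'.getVert_mem_support _)

lemma isAcyclic_induce_insert {s : Set V} {v : V} (hs : (G.induce s).IsAcyclic)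
    (hv : (s ∩ G.neighborSet v).Subsingleton) : (G.induce (insert v s)).IsAcyclic := by
  rw [isAcyclic_induce_iff] at hs ⊢
  intro u c hc
  by_contra! hcs
  by_cases hvc : v ∈ c.support
  · obtain ⟨a, ha, b, hb, hab, hva, hvb⟩ := hc.exists_adj_ne hvc
    have mem_s {x} (hx : x ∈ c.support) (hvx : G.Adj v x) : x ∈ s :=
      (hcs x hx).resolve_left hvx.ne'
    exact hab (hv ⟨mem_s ha hva, hva⟩ ⟨mem_s hb hvb, hvb⟩)
  · obtain ⟨x, hx, hxs⟩ := hs c hc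
    exact hxs ((hcs x hx).resolve_left fun hxv => hvc (hxv ▸ hx))

lemma exists_isIndepSet_isAcyclic_induce_sdiff
    (hdeg : ∀ S : Finset V, S.Nonempty → ∃ v ∈ S, (S.filter fun u => G.Adj v u).card ≤ 2)
    (S : Finset V) : ∃ I ⊆ (S : Set V), G.IsIndepSet I ∧ (G.induce (↑S \ I)).IsAcyclic := by
  induction S using Finset.strongInduction with
  | H S ih =>
    rcases S.eq_empty_or_nonempty with rfl | hS
    · exact ⟨∅, by simp, by simp,
        isAcyclic_induce_iff.mpr fun _ c _ => ⟨_, c.start_mem_support, by simp⟩⟩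
    obtain ⟨v, hvS, hdv⟩ := hdeg S hS
    obtain ⟨I, hIS, hI, hF⟩ := ih (S.erase v) (Finset.erase_ssubset hvS)
    have hvI : v ∉ I := fun h => by simpa using hIS h
    by_cases hvN : ∃ w ∈ I, G.Adj v w
    · obtain ⟨w, hwI, hvw⟩ := hvN
      refine ⟨I, hIS.trans (by simp), hI, ?_⟩
      have hsplit : (↑S \ I : Set V) = insert v (↑(S.erase v) \ I) := by
        ext x; by_cases hx : x = v <;> simp [hx, hvS, hvI]
      rw [hsplit]
      refine isAcyclic_induce_insert hF ?_
      rintro a ⟨⟨haS, haI⟩, hva⟩ b ⟨⟨hbS, hbI⟩, hvb⟩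
      by_contra hab
      have hwS : w ∈ S := Finset.mem_of_mem_erase (hIS hwI)
      have hthree : 2 < (S.filter fun u => G.Adj v u).card := Finset.two_lt_card.mpr
        ⟨a, Finset.mem_filter.mpr ⟨Finset.mem_of_mem_erase haS, hva⟩,
          b, Finset.mem_filter.mpr ⟨Finset.mem_of_mem_erase hbS, hvb⟩,
          w, Finset.mem_filter.mpr ⟨hwS, hvw⟩,
          hab, fun h => haI (h ▸ hwI), fun h => hbI (h ▸ hwI)⟩
      exact hthree.not_ge hdv
    · push Not at hvN
      refine ⟨insert v I, Set.insert_subset hvS (hIS.trans (by simp)), ?_, ?_⟩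
      · exact hI.insert fun w hw _ => ⟨hvN w hw, fun h => hvN w hw h.symm⟩
      · have hsplit : (↑S \ insert v I : Set V) = ↑(S.erase v) \ I := by
          ext x; by_cases hx : x = v <;> simp [hx]
        rwa [hsplit]

end SimpleGraph

theorem two_degenerate_near_bipartite {V : Type*} [Fintype V] (G : SimpleGraph V)
    (hdeg : ∀ S : Finset V, S.Nonempty → ∃ v ∈ S, (S.filter fun u => G.Adj v u).card ≤ 2) :
    ∃ I : Set V, (∀ u ∈ I, ∀ v ∈ I, ¬ G.Adj u v) ∧ (G.induce (Iᶜ : Set V)).IsAcyclic := by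
  obtain ⟨I, -, hI, hF⟩ := G.exists_isIndepSet_isAcyclic_induce_sdiff hdeg Finset.univ
  refine ⟨I, fun u hu v hv huv => hI hu hv huv.ne huv, ?_⟩
  rwa [Finset.coe_univ, ← Set.compl_eq_univ_sdiff] at hF
end

section
/- For every finite simple graph G, the chromatic number satisfies χ(G) ≤ wd(G) + 1, where wd(G) is the weak degeneracy of G. -/
open Classical

/-!
Weak degeneracy bounds the list chromatic number. Color the vertices in reverse order of their
removal, maintaining lists of size greater than the current value of `f`. When `u` is removed by
`Delete`, reserve a color `a` of `u` and discard it from the lists of the remaining neighbors.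
When `u` is removed by `DeleteSave` saving `w`, first cut the list of `w` down to exactly
`f w + 1` colors; since `f u > f w`, the list of `u` has a color `a` outside it, so `a` can be
discarded from every remaining neighbor of `u` while `w` keeps its list untouched.
-/

open Finset

theorem Finset.sub_one_lt_card_erase {α : Type*} {s : Finset α} {n : ℤ} (a : α) (h : n < #s) :
    n - 1 < #(s.erase a) := by
  have := pred_card_le_card_erase (s := s) (a := a)
  omega

namespace SimpleGraph

variable {V α : Type*} {G : SimpleGraph V}

def IsListColoringOn (G : SimpleGraph V) (S : Finset V) (L : V → Finset α) (c : V → α) : Prop :=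
  (∀ v ∈ S, c v ∈ L v) ∧ ∀ x ∈ S, ∀ y ∈ S, G.Adj x y → c x ≠ c y

theorem IsListColoringOn.mono {S : Finset V} {L L' : V → Finset α} {c : V → α}
    (hc : G.IsListColoringOn S L c) (hLL' : ∀ v ∈ S, L v ⊆ L' v) :
    G.IsListColoringOn S L' c :=
  ⟨fun v hv => hLL' v hv (hc.1 v hv), hc.2⟩

theorem IsListColoringOn.update_of_erase {S : Finset V} {L : V → Finset α} {c : V → α}
    {u : V} {a : α} (hu : u ∈ S) (ha : a ∈ L u)
    (hc : G.IsListColoringOn (S.erase u)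
      (fun v => if G.Adj u v then (L v).erase a else L v) c) :
    G.IsListColoringOn S L (Function.update c u a) := by
  have hc_mem : ∀ v ∈ S.erase u, c v ∈ L v := fun v hv => by
    have := hc.1 v hv
    beta_reduce at this
    split_ifs at this
    exacts [mem_of_mem_erase this, this]
  have hc_ne : ∀ v ∈ S.erase u, G.Adj u v → c v ≠ a := fun v hv huv => by
    have := hc.1 v hv
    beta_reduce at this
    rw [if_pos huv] at this
    exact ne_of_mem_erase this
  refine ⟨fun v hv => ?_, fun x hx y hy hxy => ?_⟩
  · rcases eq_or_ne v u with rfl | hvu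
    · simpa using ha
    · simpa [hvu] using hc_mem v (mem_erase.2 ⟨hvu, hv⟩)
  · rcases eq_or_ne x u with rfl | hxu
    · rw [Function.update_self, Function.update_of_ne hxy.ne.symm]
      exact (hc_ne y (mem_erase.2 ⟨hxy.ne.symm, hy⟩) hxy).symm
    rcases eq_or_ne y u with rfl | hyu
    · rw [Function.update_self, Function.update_of_ne hxu]
      exact hc_ne x (mem_erase.2 ⟨hxu, hx⟩) hxy.symm
    rw [Function.update_of_ne hxu, Function.update_of_ne hyu]
    exact hc.2 x (mem_erase.2 ⟨hxu, hx⟩) y (mem_erase.2 ⟨hyu, hy⟩) hxy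

namespace WDRem

theorem of_card_sub_one_le {S : Finset V} {f : V → ℤ} (hf : ∀ v ∈ S, #S - 1 ≤ f v) :
    G.WDRem S f := by
  induction S using strongInduction generalizing f with
  | _ S ih =>
    rcases S.eq_empty_or_nonempty with rfl | ⟨u, hu⟩
    · exact .empty f
    have hcard : (#(S.erase u) : ℤ) = #S - 1 := by
      rw [card_erase_of_mem hu, Nat.cast_sub (card_pos.2 ⟨u, hu⟩)]
      rfl
    have hbound : ∀ v ∈ S.erase u, #(S.erase u) - 1 ≤ f v - (if G.Adj u v then 1 else 0) :=
      fun v hv => by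
        have := hf v (mem_of_mem_erase hv)
        split_ifs <;> omega
    refine .delete S f u hu (fun v hv => ?_) (ih _ (erase_ssubset hu) hbound)
    have := hbound v hv
    have := card_pos.2 ⟨v, hv⟩
    omega

theorem exists_isListColoringOn [Nonempty α] {S : Finset V} {f : V → ℤ} (h : G.WDRem S f)
    {L : V → Finset α} (hf : ∀ v ∈ S, 0 ≤ f v) (hL : ∀ v ∈ S, f v < #(L v)) :
    ∃ c, G.IsListColoringOn S L c := by
  induction h generalizing L with
  | empty f => exact ⟨fun _ => Classical.arbitrary _, by simp [IsListColoringOn]⟩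
  | delete S f u hu hleg _ ih =>
    obtain ⟨a, ha⟩ : (L u).Nonempty := card_pos.1 (by have := hf u hu; have := hL u hu; omega)
    obtain ⟨c, hc⟩ := ih hleg (L := fun v => if G.Adj u v then (L v).erase a else L v)
      fun v hv => by
        have := hL v (mem_of_mem_erase hv)
        dsimp only
        split_ifs
        exacts [sub_one_lt_card_erase a this, by simpa using this]
    exact ⟨_, hc.update_of_erase hu ha⟩
  | deleteSave S f u w hu hw huw hsave hleg _ ih =>
    obtain ⟨Lw, hLw, hLw_card⟩ : ∃ Lw ⊆ L w, #Lw = (f w).toNat + 1 :=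
      exists_subset_card_eq (by have := hf w hw; have := hL w hw; omega)
    obtain ⟨a, ha, haw⟩ : ∃ a ∈ L u, a ∉ Lw := not_subset.1 fun hsub => by
      have := card_le_card hsub
      have := hf w hw; have := hL u hu
      omega
    set L₁ := Function.update L w Lw
    have hL₁ : ∀ v, L₁ v ⊆ L v := fun v => by
      rcases eq_or_ne v w with rfl | hvw
      · simpa [L₁] using hLw
      · simp [L₁, hvw]
    obtain ⟨c, hc⟩ := ih hleg (L := fun v => if G.Adj u v then (L₁ v).erase a else L₁ v)
      fun v hv => by
        have := hL v (mem_of_mem_erase hv)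
        rcases eq_or_ne v w with rfl | hvw
        · have : (L₁ v).erase a = Lw := by simpa [L₁] using erase_eq_of_notMem haw
          simp only [huw, if_true, this, hLw_card, ne_eq, not_true_eq_false, and_false]
          have := hf v hw
          omega
        · simp only [L₁, Function.update_of_ne hvw, hvw, ne_eq, not_false_eq_true, and_true]
          split_ifs
          exacts [sub_one_lt_card_erase a this, by simpa using this]
    exact ⟨_, (hc.update_of_erase hu (by simpa [L₁, huw.ne] using ha)).mono
      fun v _ => hL₁ v⟩

end WDRem

theorem WeaklyDeg.colorable [Fintype V] {d : ℕ} (h : G.WeaklyDeg fun _ => (d : ℤ)) :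
    G.Colorable (d + 1) := by
  obtain ⟨c, hc⟩ := WDRem.exists_isListColoringOn h (L := fun _ => (univ : Finset (Fin (d + 1))))
    (fun _ _ => d.cast_nonneg) (fun _ _ => by simp)
  exact ⟨Coloring.mk c fun hxy => hc.2 _ (mem_univ _) _ (mem_univ _) hxy⟩

theorem weaklyDeg_wdeg [Fintype V] (G : SimpleGraph V) :
    G.WeaklyDeg fun _ => (G.wdeg : ℤ) :=
  Nat.sInf_mem (s := {d : ℕ | G.WeaklyDeg fun _ => (d : ℤ)})
    ⟨Fintype.card V, WDRem.of_card_sub_one_le fun _ _ => by simp⟩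

end SimpleGraph

theorem chromaticNumber_le_wdeg_add_one {V : Type*} [Fintype V] (G : SimpleGraph V) :
    G.chromaticNumber ≤ (G.wdeg : ℕ∞) + 1 := by
  exact_mod_cast G.weaklyDeg_wdeg.colorable.chromaticNumber_le
end
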